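/- Let α > 0 and c₀ = √(tanh(α)/α) > 0. For p ∈ ℝ let k(p) denote the unique real root of Ω₁(k) = Ω_{−1}(k+p). Then k(p) is strictly decreasing in p. -/
import Mathlib

noncomputable def omegaA (α k : ℝ) : ℝ :=
  Real.sign k * Real.sqrt (α * k * Real.tanh (α * k))

lemma tanh_strictMono : StrictMono Real.tanh := by
  intro x y hxy
  rw [Real.tanh_eq_sinh_div_cosh, Real.tanh_eq_sinh_div_cosh,
    div_lt_div_iff₀ (Real.cosh_pos x) (Real.cosh_pos y), ← sub_pos]
  have h := Real.sinh_pos_iff.2 (sub_pos.2 hxy)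
  rw [Real.sinh_sub] at h
  linarith

lemma tanh_pos {x : ℝ} (hx : 0 < x) : 0 < Real.tanh x := by
  have := tanh_strictMono hx
  rwa [Real.tanh_zero] at this

lemma omegaA_odd (α k : ℝ) : omegaA α (-k) = -omegaA α k := by
  unfold omegaA
  rw [Real.sign_neg]
  have : α * -k * Real.tanh (α * -k) = α * k * Real.tanh (α * k) := by
    rw [mul_neg, Real.tanh_neg]; ring
  rw [this]; ring

lemma omegaA_strictMono {α : ℝ} (hα : 0 < α) : StrictMono (omegaA α) := by
  apply strictMono_of_odd_strictMonoOn_nonneg (omegaA_odd α)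
  intro x hx y hy hxy
  have hx' : (0:ℝ) ≤ x := hx
  have hy' : 0 < y := lt_of_le_of_lt hx' hxy
  have hgy : 0 < α * y * Real.tanh (α * y) :=
    mul_pos (mul_pos hα hy') (tanh_pos (mul_pos hα hy'))
  have homy : omegaA α y = Real.sqrt (α * y * Real.tanh (α * y)) := by
    unfold omegaA; rw [Real.sign_of_pos hy', one_mul]
  rcases eq_or_lt_of_le hx' with h0 | hxpos
  · have : omegaA α x = 0 := by
      unfold omegaA; rw [← h0, Real.sign_zero, zero_mul]
    rw [this, homy]
    exact Real.sqrt_pos.2 hgy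
  · have homx : omegaA α x = Real.sqrt (α * x * Real.tanh (α * x)) := by
      unfold omegaA; rw [Real.sign_of_pos hxpos, one_mul]
    rw [homx, homy]
    apply Real.sqrt_lt_sqrt (le_of_lt (mul_pos (mul_pos hα hxpos) (tanh_pos (mul_pos hα hxpos))))
    exact mul_lt_mul'' (mul_lt_mul_of_pos_left hxy hα)
      (tanh_strictMono (mul_lt_mul_of_pos_left hxy hα))
      (le_of_lt (mul_pos hα hxpos)) (le_of_lt (tanh_pos (mul_pos hα hxpos)))

theorem collision_root_strictAnti (α : ℝ) (hα : 0 < α) (K : ℝ → ℝ)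
    (hK : ∀ p : ℝ, omegaA α (K p) + omegaA α (K p + p) =
      -(α * Real.sqrt (Real.tanh α / α) * p)) :
    StrictAnti K := by
  have hmono := omegaA_strictMono hα
  have hc : 0 < α * Real.sqrt (Real.tanh α / α) :=
    mul_pos hα (Real.sqrt_pos.2 (div_pos (tanh_pos hα) hα))
  intro p q hpq
  by_contra h
  push_neg at h
  have h1 : omegaA α (K p) ≤ omegaA α (K q) := hmono.monotone h
  have h2 : omegaA α (K p + p) < omegaA α (K q + q) :=
    hmono (add_lt_add_of_le_of_lt h hpq)
  have hlt : omegaA α (K p) + omegaA α (K p + p) < omegaA α (K q) + omegaA α (K q + q) :=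
    add_lt_add_of_le_of_lt h1 h2
  rw [hK p, hK q] at hlt
  have : q < p := by
    have := neg_lt_neg_iff.mp (by linarith : -(α * Real.sqrt (Real.tanh α / α) * p) < -(α * Real.sqrt (Real.tanh α / α) * q)) 
    exact lt_of_mul_lt_mul_left this (le_of_lt hc)
  linarith
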